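/- arXiv:2406.08579 — 7 statements merged into one kernel-verified Lean document; each statement's English description precedes it below -/
import Mathlib

section
/- Let n ≥ 1, let i ∈ {1,…,n}, let 0 < s < 1 and 1 < p < ∞ be real numbers, and let R ≥ 1. Let u : ℝⁿ → ℝ be a measurable function with u(x) = 0 for almost every x outside the cube Q_R = [-R,R]ⁿ. Then ∫_{ℝⁿ} |u(x)|^p dx ≤ (p/2)·(2R)^p · ∫_{ℝⁿ} ∫_{ℝ} |u(x + h·eᵢ) − u(x)|^p / |h|^{1+sp} dh dx, where both sides are interpreted as (possibly infinite) Lebesgue integrals with values in [0,∞]. -/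
open MeasureTheory Set ENNReal

/-- Directional fractional Poincaré inequality on the cube `Q_R = [-R,R]^n`. -/
theorem fractional_poincare_cube (n : ℕ) (hn : 1 ≤ n) (i : Fin n) (s p R : ℝ)
    (hs0 : 0 < s) (hs1 : s < 1) (hp : 1 < p) (hR : 1 ≤ R)
    (u : (Fin n → ℝ) → ℝ) (hu : Measurable u)
    (hsupp : ∀ᵐ x : Fin n → ℝ, ¬ (∀ j, |x j| ≤ R) → u x = 0) :
    (∫⁻ x : Fin n → ℝ, ENNReal.ofReal (|u x| ^ p)) ≤
      ENNReal.ofReal ((p / 2) * (2 * R) ^ p) *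
        ∫⁻ x : Fin n → ℝ, ∫⁻ h : ℝ,
          ENNReal.ofReal
            (|u (x + h • (Pi.single i 1 : Fin n → ℝ)) - u x| ^ p / |h| ^ (1 + s * p)) := by
  have hp0 : (0:ℝ) < p := lt_trans one_pos hp
  have hsp : (0:ℝ) < s * p := mul_pos hs0 hp0
  set a : ℝ := 1 + s * p with ha_def
  set c : ℝ := 2 * R with hc_def
  have hc0 : (0:ℝ) < c := by rw [hc_def]; linarith
  have hc2 : (2:ℝ) ≤ c := by rw [hc_def]; linarith
  set e : Fin n → ℝ := Pi.single i 1 with he_def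
  -- the exceptional null set
  set N : Set (Fin n → ℝ) := {y | ¬ (∀ j, |y j| ≤ R)} ∩ {y | u y ≠ 0} with hN_def
  have hcube : MeasurableSet {y : Fin n → ℝ | ∀ j, |y j| ≤ R} := by
    rw [Set.setOf_forall]
    exact MeasurableSet.iInter fun j =>
      measurableSet_le (measurable_pi_apply j).abs measurable_const
  have hNmeas : MeasurableSet N :=
    hcube.compl.inter ((hu (measurableSet_singleton 0)).compl)
  have hN0 : volume N = 0 := by
    have h := ae_iff.mp hsupp
    convert h using 2
    ext y
    simp only [hN_def, mem_inter_iff, mem_setOf_eq, _root_.not_imp]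
  -- measurability of the translation map
  have hm : Measurable fun z : (Fin n → ℝ) × ℝ => z.1 + z.2 • e :=
    measurable_fst.add (measurable_snd.smul measurable_const)
  -- a.e. x, the set of bad h is null
  have hsec : ∀ᵐ x : Fin n → ℝ, (volume : Measure ℝ) {h | x + h • e ∈ N} = 0 := by
    have hS : MeasurableSet {w : ℝ × (Fin n → ℝ) | w.2 + w.1 • e ∈ N} :=
      (measurable_snd.add (measurable_fst.smul measurable_const)) hNmeas
    have h1 : ((volume : Measure ℝ).prod (volume : Measure (Fin n → ℝ)))
        {w : ℝ × (Fin n → ℝ) | w.2 + w.1 • e ∈ N} = 0 := by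
      rw [Measure.measure_prod_null hS]
      refine Filter.Eventually.of_forall fun h => ?_
      show volume ((fun x => x + h • e) ⁻¹' N) = (0 : ℝ → ℝ≥0∞) h
      simp only [Pi.zero_apply]
      rw [measure_preimage_add_right]
      exact hN0
    have hT : MeasurableSet {z : (Fin n → ℝ) × ℝ | z.1 + z.2 • e ∈ N} := hm hNmeas
    have h2 : ((volume : Measure (Fin n → ℝ)).prod (volume : Measure ℝ))
        {z : (Fin n → ℝ) × ℝ | z.1 + z.2 • e ∈ N} = 0 := by
      have hmap := Measure.prod_swap (μ := (volume : Measure ℝ))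
        (ν := (volume : Measure (Fin n → ℝ)))
      calc ((volume : Measure (Fin n → ℝ)).prod (volume : Measure ℝ))
            {z : (Fin n → ℝ) × ℝ | z.1 + z.2 • e ∈ N}
          = (Measure.map Prod.swap
              ((volume : Measure ℝ).prod (volume : Measure (Fin n → ℝ))))
              {z : (Fin n → ℝ) × ℝ | z.1 + z.2 • e ∈ N} := by rw [hmap]
        _ = ((volume : Measure ℝ).prod (volume : Measure (Fin n → ℝ)))
              (Prod.swap ⁻¹' {z : (Fin n → ℝ) × ℝ | z.1 + z.2 • e ∈ N}) :=
            Measure.map_apply measurable_swap hT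
        _ = 0 := h1
    rw [Measure.measure_prod_null hT] at h2
    filter_upwards [h2] with x hx
    simpa using hx
  -- the one-dimensional integral computation
  set B : Set ℝ := {h | c < |h|} with hB_def
  have hBmeas : MeasurableSet B := measurableSet_lt measurable_const measurable_abs
  have hIoi : ∫⁻ h in Ioi c, ENNReal.ofReal (|h| ^ (-a))
      = ENNReal.ofReal (c ^ (-(s*p)) / (s*p)) := by
    have hcongr : ∫⁻ h in Ioi c, ENNReal.ofReal (|h| ^ (-a))
        = ∫⁻ h in Ioi c, ENNReal.ofReal (h ^ (-a)) := by
      refine setLIntegral_congr_fun measurableSet_Ioi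
        (fun h hh => ?_)
      rw [abs_of_pos (lt_trans hc0 hh)]
    have hInt : IntegrableOn (fun t : ℝ => t ^ (-a)) (Ioi c) :=
      integrableOn_Ioi_rpow_of_lt (by rw [ha_def]; linarith) hc0
    have hnn : 0 ≤ᵐ[volume.restrict (Ioi c)] fun t : ℝ => t ^ (-a) := by
      refine (ae_restrict_iff' measurableSet_Ioi).2
        (Filter.Eventually.of_forall fun h hh => ?_)
      exact Real.rpow_nonneg (le_of_lt (lt_trans hc0 hh)) _
    rw [hcongr, ← ofReal_integral_eq_lintegral_ofReal hInt hnn,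
      integral_Ioi_rpow_of_lt (by rw [ha_def]; linarith) hc0]
    congr 1
    have hexp : -a + 1 = -(s*p) := by rw [ha_def]; ring
    rw [hexp]
    rw [neg_div_neg_eq]
  have hIio : ∫⁻ h in Iio (-c), ENNReal.ofReal (|h| ^ (-a))
      = ENNReal.ofReal (c ^ (-(s*p)) / (s*p)) := by
    have hneg : MeasurePreserving (fun x : ℝ => -x) volume volume :=
      Measure.measurePreserving_neg _
    have hpre : (fun x : ℝ => -x) ⁻¹' (Iio (-c)) = Ioi c := by
      ext x; simp [neg_lt_neg_iff]
    rw [← hneg.setLIntegral_comp_preimage_emb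
      (MeasurableEquiv.neg ℝ).measurableEmbedding
      (fun h => ENNReal.ofReal (|h| ^ (-a))) (Iio (-c)), hpre]
    simp only [abs_neg]
    exact hIoi
  have hK : ∫⁻ h in B, ENNReal.ofReal (|h| ^ (-a))
      = 2 * ENNReal.ofReal (c ^ (-(s*p)) / (s*p)) := by
    have hBsplit : B = Iio (-c) ∪ Ioi c := by
      ext h
      simp only [hB_def, mem_setOf_eq, mem_union, mem_Iio, mem_Ioi, lt_abs]
      constructor
      · rintro (h1 | h1)
        · right; exact h1
        · left; linarith
      · rintro (h1 | h1)
        · right; linarith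
        · left; exact h1
    have hdisj : Disjoint (Iio (-c)) (Ioi c) := by
      refine Set.disjoint_left.2 fun x hx hx' => ?_
      simp only [mem_Iio] at hx
      simp only [mem_Ioi] at hx'
      linarith
    rw [hBsplit, lintegral_union measurableSet_Ioi hdisj, hIio, hIoi, two_mul]
  -- a.e. pointwise lower bound for the inner integral
  have key : ∀ᵐ x : Fin n → ℝ,
      ENNReal.ofReal (|u x| ^ p) * (2 * ENNReal.ofReal (c ^ (-(s*p)) / (s*p)))
        ≤ ∫⁻ h : ℝ, ENNReal.ofReal (|u (x + h • e) - u x| ^ p / |h| ^ a) := by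
    filter_upwards [hsec, measure_eq_zero_iff_ae_notMem.mp hN0] with x hx hxN
    have hmeas2 : Measurable fun h : ℝ => ENNReal.ofReal (|h| ^ (-a)) := by
      fun_prop
    calc ENNReal.ofReal (|u x| ^ p) * (2 * ENNReal.ofReal (c ^ (-(s*p)) / (s*p)))
        = ENNReal.ofReal (|u x| ^ p) * ∫⁻ h in B, ENNReal.ofReal (|h| ^ (-a)) := by
          rw [hK]
      _ = ∫⁻ h in B, ENNReal.ofReal (|u x| ^ p) * ENNReal.ofReal (|h| ^ (-a)) :=
          (lintegral_const_mul _ hmeas2).symm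
      _ ≤ ∫⁻ h in B, ENNReal.ofReal (|u (x + h • e) - u x| ^ p / |h| ^ a) := by
          refine lintegral_mono_ae ?_
          filter_upwards [ae_restrict_mem hBmeas,
            ae_restrict_of_ae (measure_eq_zero_iff_ae_notMem.mp hx)] with h hhB hhN
          have hhB' : c < |h| := hhB
          have h0 : (0:ℝ) < |h| := lt_trans hc0 hhB'
          have hua : |u x| ≤ |u (x + h • e) - u x| := by
            by_cases hux : u x = 0
            · rw [hux]; simp
            · have hxcube : ∀ j, |x j| ≤ R := by
                by_contra hcon
                exact hxN ⟨hcon, hux⟩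
              have hyi : ¬ (∀ j, |(x + h • e) j| ≤ R) := by
                intro hall
                have h1 := hall i
                have hei : (x + h • e) i = x i + h := by
                  simp [he_def, Pi.single_apply]
                rw [hei] at h1
                have h2 := hxcube i
                have h3 : |h| ≤ c := by
                  have : |h| = |(x i + h) - x i| := by ring_nf
                  rw [this]
                  calc |(x i + h) - x i| ≤ |x i + h| + |x i| := abs_sub _ _
                    _ ≤ R + R := add_le_add h1 h2
                    _ = c := by rw [hc_def]; ring
                linarith
              have huy : u (x + h • e) = 0 := by
                by_contra hne
                exact hhN ⟨hyi, hne⟩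
              rw [huy]
              rw [zero_sub, abs_neg]
          have hdiv : |u x| ^ p / |h| ^ a ≤ |u (x + h • e) - u x| ^ p / |h| ^ a := by
            exact div_le_div_of_nonneg_right
              (Real.rpow_le_rpow (abs_nonneg _) hua (le_of_lt hp0))
              (Real.rpow_pos_of_pos h0 _).le
          have heq : ENNReal.ofReal (|u x| ^ p) * ENNReal.ofReal (|h| ^ (-a))
              = ENNReal.ofReal (|u x| ^ p / |h| ^ a) := by
            rw [← ENNReal.ofReal_mul (by positivity), Real.rpow_neg (abs_nonneg _),
              div_eq_mul_inv]
          rw [heq]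
          exact ENNReal.ofReal_le_ofReal hdiv
      _ ≤ ∫⁻ h : ℝ, ENNReal.ofReal (|u (x + h • e) - u x| ^ p / |h| ^ a) :=
          setLIntegral_le_lintegral _ _
  -- combine
  have hmeasL : Measurable fun x : Fin n → ℝ => ENNReal.ofReal (|u x| ^ p) := by
    fun_prop
  have main : (∫⁻ x : Fin n → ℝ, ENNReal.ofReal (|u x| ^ p))
      * (2 * ENNReal.ofReal (c ^ (-(s*p)) / (s*p)))
      ≤ ∫⁻ x : Fin n → ℝ, ∫⁻ h : ℝ,
          ENNReal.ofReal (|u (x + h • e) - u x| ^ p / |h| ^ a) := by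
    rw [← lintegral_mul_const _ hmeasL]
    exact lintegral_mono_ae key
  have hCK : 1 ≤ ENNReal.ofReal ((p / 2) * c ^ p)
      * (2 * ENNReal.ofReal (c ^ (-(s*p)) / (s*p))) := by
    have h2 : (2 : ℝ≥0∞) * ENNReal.ofReal (c ^ (-(s*p)) / (s*p))
        = ENNReal.ofReal (2 * (c ^ (-(s*p)) / (s*p))) := by
      rw [ENNReal.ofReal_mul (by norm_num)]
      norm_num
    rw [h2, ← ENNReal.ofReal_mul (by positivity), ← ENNReal.ofReal_one]
    apply ENNReal.ofReal_le_ofReal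
    have hval : (p / 2) * c ^ p * (2 * (c ^ (-(s*p)) / (s*p))) = c ^ (p - s*p) / s := by
      rw [show p - s*p = p + -(s*p) by ring, Real.rpow_add hc0]
      field_simp
    rw [hval]
    rw [one_le_div hs0]
    calc s ≤ 1 := le_of_lt hs1
      _ ≤ c ^ (p - s*p) := Real.one_le_rpow (by linarith) (by nlinarith)
  calc (∫⁻ x : Fin n → ℝ, ENNReal.ofReal (|u x| ^ p))
      = 1 * (∫⁻ x : Fin n → ℝ, ENNReal.ofReal (|u x| ^ p)) := (one_mul _).symm
    _ ≤ (ENNReal.ofReal ((p / 2) * c ^ p)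
          * (2 * ENNReal.ofReal (c ^ (-(s*p)) / (s*p))))
        * (∫⁻ x : Fin n → ℝ, ENNReal.ofReal (|u x| ^ p)) := _root_.mul_le_mul_left hCK _
    _ = ENNReal.ofReal ((p / 2) * c ^ p)
        * ((∫⁻ x : Fin n → ℝ, ENNReal.ofReal (|u x| ^ p))
            * (2 * ENNReal.ofReal (c ^ (-(s*p)) / (s*p)))) := by ring
    _ ≤ ENNReal.ofReal ((p / 2) * c ^ p)
        * ∫⁻ x : Fin n → ℝ, ∫⁻ h : ℝ,
            ENNReal.ofReal (|u (x + h • e) - u x| ^ p / |h| ^ a) :=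
        _root_.mul_le_mul_right main _
end

section
/- Let n ≥ 1, let Ω ⊂ ℝⁿ be a bounded open set, and let 1 < p < ∞ be a real number. There exists a constant C > 0, depending only on Ω and p (and in particular independent of s and of i), such that for every s ∈ (0,1), every i ∈ {1,…,n}, and every measurable function u : ℝⁿ → ℝ with u = 0 almost everywhere on ℝⁿ \ Ω, one has ∫_{ℝⁿ} |u(x)|^p dx ≤ C · ∫_{ℝⁿ} ∫_{ℝ} |u(x + h·eᵢ) − u(x)|^p / |h|^{1+sp} dh dx, where both sides are interpreted as (possibly infinite) Lebesgue integrals with values in [0,∞]. -/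
/-!
If `Ω ⊆ closedBall 0 R`, then for `h ∈ [2R + 1, 2R + 2]` the translate `Ω + h eᵢ` is disjoint
from `Ω`, so `|u x| ≤ |u (x + h eᵢ) - u x|` almost everywhere and hence
`∫ |u|ᵖ ≤ ∫ |u (x + h eᵢ) - u x|ᵖ dx`. On this unit interval of `h` the kernel `|h|^(-1-sp)` is at
least `(2R + 2)^(-1-p)` whatever `s ∈ (0,1)` is; averaging over the interval and exchanging the
integrals gives the inequality with `C = (2R + 2)^(1+p)`.
-/

open MeasureTheory Set Function ENNReal

theorem add_notMem_of_subset_closedBall {E : Type*} [SeminormedAddCommGroup E] {Ω : Set E}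
    {R : ℝ} (hΩ : Ω ⊆ Metric.closedBall 0 R) {v : E} (hv : 2 * R < ‖v‖) {x : E} (hx : x ∈ Ω) :
    x + v ∉ Ω := fun hxv => by
  have hx := mem_closedBall_zero_iff.1 (hΩ hx)
  have hxv := mem_closedBall_zero_iff.1 (hΩ hxv)
  have : ‖v‖ ≤ ‖x + v‖ + ‖x‖ := by simpa using norm_sub_le (x + v) x
  linarith

theorem ae_abs_le_abs_add_sub {G : Type*} [MeasurableSpace G] [AddGroup G] [MeasurableAdd G]
    {μ : Measure G} [μ.IsAddRightInvariant] {Ω : Set G} {u : G → ℝ}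
    (hu : ∀ᵐ x ∂μ, x ∉ Ω → u x = 0) {v : G} (hv : ∀ x ∈ Ω, x + v ∉ Ω) :
    ∀ᵐ x ∂μ, |u x| ≤ |u (x + v) - u x| := by
  have hu_add : ∀ᵐ x ∂μ, x + v ∉ Ω → u (x + v) = 0 :=
    (measurePreserving_add_right μ v).quasiMeasurePreserving.tendsto_ae.eventually hu
  filter_upwards [hu, hu_add] with x hx hx_add
  by_cases hxΩ : x ∈ Ω
  · rw [hx_add (hv x hxΩ), zero_sub, abs_neg]
  · simp [hx hxΩ]

theorem lintegral_rpow_abs_le_lintegral_rpow_abs_add_sub {G : Type*} [MeasurableSpace G]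
    [AddGroup G] [MeasurableAdd G] {μ : Measure G} [μ.IsAddRightInvariant] {Ω : Set G}
    {u : G → ℝ} (hu : ∀ᵐ x ∂μ, x ∉ Ω → u x = 0) {v : G} (hv : ∀ x ∈ Ω, x + v ∉ Ω)
    {p : ℝ} (hp : 0 ≤ p) :
    ∫⁻ x, ENNReal.ofReal (|u x| ^ p) ∂μ ≤ ∫⁻ x, ENNReal.ofReal (|u (x + v) - u x| ^ p) ∂μ :=
  lintegral_mono_ae <| (ae_abs_le_abs_add_sub hu hv).mono fun _ hx =>
    ENNReal.ofReal_le_ofReal <| Real.rpow_le_rpow (abs_nonneg _) hx hp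

theorem Real.rpow_le_rpow_of_le_of_exponent_le {x y r t : ℝ} (hx : 0 ≤ x) (hxy : x ≤ y) (hy : 1 ≤ y)
    (hr : 0 ≤ r) (hrt : r ≤ t) : x ^ r ≤ y ^ t :=
  (Real.rpow_le_rpow hx hxy hr).trans (Real.rpow_le_rpow_of_exponent_le hy hrt)

theorem lintegral_ofReal_le_mul_lintegral_ofReal_div {α : Type*} [MeasurableSpace α]
    {μ : Measure α} {f : α → ℝ} (hf : ∀ x, 0 ≤ f x) {w K : ℝ} (hw : 0 < w) (hwK : w ≤ K) :
    ∫⁻ x, ENNReal.ofReal (f x) ∂μ ≤ ENNReal.ofReal K * ∫⁻ x, ENNReal.ofReal (f x / w) ∂μ := by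
  rw [← lintegral_const_mul' _ _ ofReal_ne_top]
  refine lintegral_mono fun x => ?_
  rw [← ENNReal.ofReal_mul (hw.le.trans hwK)]
  refine ENNReal.ofReal_le_ofReal ?_
  calc f x = w * (f x / w) := by field_simp
    _ ≤ K * (f x / w) := by gcongr; exact div_nonneg (hf x) hw.le

theorem le_mul_lintegral_lintegral_of_forall_mem_Icc {α : Type*} [MeasurableSpace α]
    {μ : Measure α} [SFinite μ] {F : α → ℝ → ℝ≥0∞} (hF : Measurable (uncurry F))
    {L c : ℝ≥0∞} {a : ℝ} (hL : ∀ t ∈ Icc a (a + 1), L ≤ c * ∫⁻ x, F x t ∂μ) :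
    L ≤ c * ∫⁻ x, (∫⁻ t, F x t) ∂μ :=
  calc L = ∫⁻ _ in Icc a (a + 1), L := by simp
    _ ≤ ∫⁻ t in Icc a (a + 1), c * ∫⁻ x, F x t ∂μ := setLIntegral_mono' measurableSet_Icc hL
    _ ≤ ∫⁻ t, c * ∫⁻ x, F x t ∂μ := setLIntegral_le_lintegral _ _
    _ = c * ∫⁻ x, (∫⁻ t, F x t) ∂μ := by
      rw [lintegral_const_mul _ hF.lintegral_prod_left, lintegral_lintegral_swap hF.aemeasurable]

theorem fractional_poincare_bounded_general (n : ℕ) (Ω : Set (Fin n → ℝ))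
    (hΩbdd : Bornology.IsBounded Ω) (p : ℝ) (hp : 1 < p) :
    ∃ C : ℝ, 0 < C ∧
      ∀ (s : ℝ), 0 < s → s < 1 →
        ∀ (i : Fin n) (u : (Fin n → ℝ) → ℝ), Measurable u →
          (∀ᵐ x : Fin n → ℝ, x ∉ Ω → u x = 0) →
          (∫⁻ x : Fin n → ℝ, ENNReal.ofReal (|u x| ^ p)) ≤
            ENNReal.ofReal C *
              ∫⁻ x : Fin n → ℝ, ∫⁻ h : ℝ,
                ENNReal.ofReal
                  (|u (x + h • (Pi.single i 1 : Fin n → ℝ)) - u x| ^ p /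
                    |h| ^ (1 + s * p)) := by
  obtain ⟨R, hR, hΩR⟩ : ∃ R, 0 ≤ R ∧ Ω ⊆ Metric.closedBall 0 R := by
    obtain ⟨r, hr⟩ := hΩbdd.subset_closedBall 0
    exact ⟨max r 0, le_max_right _ _,
      hr.trans (Metric.closedBall_subset_closedBall (le_max_left _ _))⟩
  refine ⟨(2 * R + 2) ^ (1 + p), by positivity, fun s hs0 hs1 i u hu hu0 => ?_⟩
  refine le_mul_lintegral_lintegral_of_forall_mem_Icc (a := 2 * R + 1) (by fun_prop)
    fun h ⟨hh₁, hh₂⟩ => ?_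
  have hh : 0 < h := by linarith
  have h_shift : 2 * R < ‖h • (Pi.single i 1 : Fin n → ℝ)‖ := by
    rw [norm_smul, Pi.norm_single, norm_one, mul_one, Real.norm_of_nonneg hh.le]
    linarith
  have h_kernel : |h| ^ (1 + s * p) ≤ (2 * R + 2) ^ (1 + p) := by
    rw [abs_of_pos hh]
    exact Real.rpow_le_rpow_of_le_of_exponent_le hh.le (by linarith) (by linarith) (by positivity)
      (by nlinarith)
  calc ∫⁻ x, ENNReal.ofReal (|u x| ^ p)
      ≤ ∫⁻ x, ENNReal.ofReal (|u (x + h • (Pi.single i 1 : Fin n → ℝ)) - u x| ^ p) :=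
        lintegral_rpow_abs_le_lintegral_rpow_abs_add_sub hu0
          (fun _ => add_notMem_of_subset_closedBall hΩR h_shift) (by linarith)
    _ ≤ _ := lintegral_ofReal_le_mul_lintegral_ofReal_div (fun _ => by positivity)
        (by positivity) h_kernel

/-- Directional fractional Poincaré inequality on a bounded open set, with a constant
independent of `s ∈ (0,1)` and of the coordinate direction `i`. -/
theorem fractional_poincare_bounded (n : ℕ) (hn : 1 ≤ n) (Ω : Set (Fin n → ℝ))
    (hΩopen : IsOpen Ω) (hΩbdd : Bornology.IsBounded Ω) (p : ℝ) (hp : 1 < p) :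
    ∃ C : ℝ, 0 < C ∧
      ∀ (s : ℝ), 0 < s → s < 1 →
        ∀ (i : Fin n) (u : (Fin n → ℝ) → ℝ), Measurable u →
          (∀ᵐ x : Fin n → ℝ, x ∉ Ω → u x = 0) →
          (∫⁻ x : Fin n → ℝ, ENNReal.ofReal (|u x| ^ p)) ≤
            ENNReal.ofReal C *
              ∫⁻ x : Fin n → ℝ, ∫⁻ h : ℝ,
                ENNReal.ofReal
                  (|u (x + h • (Pi.single i 1 : Fin n → ℝ)) - u x| ^ p /
                    |h| ^ (1 + s * p)) :=
  fractional_poincare_bounded_general n Ω hΩbdd p hp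
end

section
/- Let n ≥ 1, let Ω ⊂ ℝⁿ be a bounded open set, and let s₁,…,sₙ ∈ (0,1) and p₁,…,pₙ ∈ (1,∞) be real numbers. There exists a constant C > 0, depending only on Ω, the pⱼ's and the sⱼ's, such that for every measurable function u : ℝⁿ → ℝ with u = 0 almost everywhere on ℝⁿ \ Ω and with finite directional seminorms [u]_{sⱼ,pⱼ,j} = (1−sⱼ)·sⱼ · ∫_{ℝⁿ} ∫_{ℝ} |u(x + h·eⱼ) − u(x)|^{pⱼ} / |h|^{1+sⱼpⱼ} dh dx < ∞ for all j ∈ {1,…,n}, and for every i ∈ {1,…,n}, one has (∫_{ℝⁿ} |u(x)|^{pᵢ} dx)^{1/pᵢ} ≤ C · Σ_{j=1}^{n} ( [u]_{sⱼ,pⱼ,j} )^{1/pⱼ}. -/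
open MeasureTheory

lemma core_estimate {n : ℕ} (i : Fin n) (R : ℝ) (hR : 0 < R)
    (Ω : Set (Fin n → ℝ)) (hΩm : MeasurableSet Ω) (hΩ : Ω ⊆ Metric.ball 0 R)
    (σ q : ℝ) (hσ : 0 < σ) (hq : 0 < q)
    (u : (Fin n → ℝ) → ℝ) (hu : Measurable u)
    (hue : ∀ᵐ x : Fin n → ℝ, x ∉ Ω → u x = 0) :
    (∫⁻ x : Fin n → ℝ, ENNReal.ofReal (|u x| ^ q)) ≤
      ENNReal.ofReal ((3 * R) ^ (1 + σ * q) / R) *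
        ∫⁻ x : Fin n → ℝ, ∫⁻ h : ℝ,
          ENNReal.ofReal
            (|u (x + h • (Pi.single i 1 : Fin n → ℝ)) - u x| ^ q / |h| ^ (1 + σ * q)) := by
  set e : Fin n → ℝ := Pi.single i 1 with he
  set N : Set (Fin n → ℝ) := {y | y ∉ Ω ∧ u y ≠ 0} with hN
  have hNmeas : MeasurableSet N :=
    hΩm.compl.inter ((hu (measurableSet_singleton (0:ℝ))).compl)
  have hNnull : volume N = 0 := by
    rw [measure_eq_zero_iff_ae_notMem]
    filter_upwards [hue] with x hx hxN
    exact hxN.2 (hx hxN.1)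
  -- product null set
  have hcontmap : Measurable fun z : ℝ × (Fin n → ℝ) => z.2 + z.1 • e :=
    (continuous_snd.add (continuous_fst.smul continuous_const)).measurable
  set T : Set (ℝ × (Fin n → ℝ)) := (fun z : ℝ × (Fin n → ℝ) => z.2 + z.1 • e) ⁻¹' N with hT
  have hTmeas : MeasurableSet T := hcontmap hNmeas
  have hTnull : (volume.prod volume) T = 0 := by
    rw [Measure.measure_prod_null hTmeas]
    refine Filter.Eventually.of_forall fun h => ?_
    have hpre : Prod.mk h ⁻¹' T = (fun x : Fin n → ℝ => x + h • e) ⁻¹' N := rfl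
    show volume (Prod.mk h ⁻¹' T) = 0
    rw [hpre, measure_preimage_add_right]
    exact hNnull
  have hT'null : (volume.prod volume) (Prod.swap ⁻¹' T : Set ((Fin n → ℝ) × ℝ)) = 0 := by
    have hswap := Measure.prod_swap (μ := (volume : Measure (Fin n → ℝ)))
      (ν := (volume : Measure ℝ))
    calc (volume.prod volume) (Prod.swap ⁻¹' T : Set ((Fin n → ℝ) × ℝ))
        = ((volume.prod volume).map Prod.swap) T := by
          rw [Measure.map_apply measurable_swap hTmeas]
      _ = (volume.prod volume) T := by rw [hswap]
      _ = 0 := hTnull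
  have key : ∀ᵐ x : Fin n → ℝ, ∀ᵐ h : ℝ, x + h • e ∉ N := by
    have : ∀ᵐ z : (Fin n → ℝ) × ℝ ∂(volume.prod volume), z ∉ (Prod.swap ⁻¹' T) :=
      measure_eq_zero_iff_ae_notMem.mp hT'null
    exact Measure.ae_ae_of_ae_prod this
  have hxΩ : ∀ᵐ x : Fin n → ℝ, u x ≠ 0 → x ∈ Ω := by
    filter_upwards [hue] with x hx hne
    by_contra hc; exact hne (hx hc)
  -- constants
  set E : ℝ := 1 + σ * q with hE
  have hEpos : 0 < E := by positivity
  have h3R : (0:ℝ) < 3 * R := by linarith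
  have hDpos : 0 < (3 * R) ^ E := Real.rpow_pos_of_pos h3R E
  set K : ℝ := R / (3 * R) ^ E with hKdef
  have hKpos : 0 < K := div_pos hR hDpos
  have meas_int : Measurable fun x : Fin n → ℝ => ENNReal.ofReal (|u x| ^ q) :=
    ((Real.continuous_rpow_const hq.le).measurable.comp hu.abs).ennreal_ofReal
  -- main pointwise-in-x estimate
  have step1 : ∫⁻ x : Fin n → ℝ, ENNReal.ofReal (|u x| ^ q * K) ≤
      ∫⁻ x : Fin n → ℝ, ∫⁻ h : ℝ,
        ENNReal.ofReal (|u (x + h • e) - u x| ^ q / |h| ^ E) := by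
    refine lintegral_mono_ae ?_
    filter_upwards [key, hxΩ] with x hxkey hxO
    have hb : ∀ᵐ h ∂(volume.restrict (Set.Ioo (2*R) (3*R))),
        ENNReal.ofReal (|u x| ^ q / (3 * R) ^ E) ≤
          ENNReal.ofReal (|u (x + h • e) - u x| ^ q / |h| ^ E) := by
      rw [ae_restrict_iff' measurableSet_Ioo]
      filter_upwards [hxkey] with h hh hmem
      by_cases hux : u x = 0
      · simp [hux, Real.zero_rpow hq.ne', abs_zero]
      · have hxmem : x ∈ Ω := hxO hux
        have hnorm : ‖x‖ < R := by simpa [mem_ball_zero_iff] using hΩ hxmem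
        have hval : (x + h • e) i = x i + h := by
          simp [he, Pi.single_eq_same]
        have habs : |x i| ≤ ‖x‖ := by
          simpa using norm_le_pi_norm x i
        have hgt : R < (x + h • e) i := by
          rw [hval]
          have := neg_abs_le (x i)
          obtain ⟨hm1, hm2⟩ := hmem
          linarith
        have hout : x + h • e ∉ Ω := by
          intro hc
          have hb' : ‖x + h • e‖ < R := by simpa [mem_ball_zero_iff] using hΩ hc
          have h1 : |(x + h • e) i| ≤ ‖x + h • e‖ := by
            simpa using norm_le_pi_norm (x + h • e) i
          have h2 : (x + h • e) i ≤ |(x + h • e) i| := le_abs_self _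
          linarith
        have huz : u (x + h • e) = 0 := by
          by_contra hne; exact hh ⟨hout, hne⟩
        have hpos : (0:ℝ) < h := by
          obtain ⟨hm1, _⟩ := hmem; linarith
        rw [huz, zero_sub, abs_neg, abs_of_pos hpos]
        apply ENNReal.ofReal_le_ofReal
        have hle : h ^ E ≤ (3 * R) ^ E :=
          Real.rpow_le_rpow hpos.le (le_of_lt hmem.2) hEpos.le
        have hhpos : 0 < h ^ E := Real.rpow_pos_of_pos hpos E
        gcongr
    calc ENNReal.ofReal (|u x| ^ q * K)
        = ENNReal.ofReal (|u x| ^ q / (3 * R) ^ E) * ENNReal.ofReal R := by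
          rw [← ENNReal.ofReal_mul (by positivity)]
          congr 1
          rw [hKdef]; ring
      _ = ENNReal.ofReal (|u x| ^ q / (3 * R) ^ E) * volume (Set.Ioo (2*R) (3*R)) := by
          rw [Real.volume_Ioo]
          congr 1
          ring_nf
      _ = ∫⁻ _ in Set.Ioo (2*R) (3*R), ENNReal.ofReal (|u x| ^ q / (3 * R) ^ E) := by
          rw [setLIntegral_const]
      _ ≤ ∫⁻ h in Set.Ioo (2*R) (3*R),
            ENNReal.ofReal (|u (x + h • e) - u x| ^ q / |h| ^ E) := lintegral_mono_ae hb
      _ ≤ ∫⁻ h : ℝ, ENNReal.ofReal (|u (x + h • e) - u x| ^ q / |h| ^ E) :=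
          setLIntegral_le_lintegral _ _
  have step2 : ∫⁻ x : Fin n → ℝ, ENNReal.ofReal (|u x| ^ q * K) =
      (∫⁻ x : Fin n → ℝ, ENNReal.ofReal (|u x| ^ q)) * ENNReal.ofReal K := by
    rw [← lintegral_mul_const _ meas_int]
    congr 1
    ext x
    rw [← ENNReal.ofReal_mul (Real.rpow_nonneg (abs_nonneg _) q)]
  have hfinal : (∫⁻ x : Fin n → ℝ, ENNReal.ofReal (|u x| ^ q)) =
      ((∫⁻ x : Fin n → ℝ, ENNReal.ofReal (|u x| ^ q)) * ENNReal.ofReal K) *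
        ENNReal.ofReal ((3 * R) ^ E / R) := by
    rw [mul_assoc, ← ENNReal.ofReal_mul hKpos.le,
      show K * ((3 * R) ^ E / R) = 1 by rw [hKdef]; field_simp]
    simp
  calc (∫⁻ x : Fin n → ℝ, ENNReal.ofReal (|u x| ^ q))
      = ((∫⁻ x : Fin n → ℝ, ENNReal.ofReal (|u x| ^ q)) * ENNReal.ofReal K) *
          ENNReal.ofReal ((3 * R) ^ E / R) := hfinal
    _ ≤ (∫⁻ x : Fin n → ℝ, ∫⁻ h : ℝ,
          ENNReal.ofReal (|u (x + h • e) - u x| ^ q / |h| ^ E)) *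
          ENNReal.ofReal ((3 * R) ^ E / R) := by
        rw [← step2]; exact mul_le_mul_left step1 _
    _ = ENNReal.ofReal ((3 * R) ^ E / R) *
          ∫⁻ x : Fin n → ℝ, ∫⁻ h : ℝ,
            ENNReal.ofReal (|u (x + h • e) - u x| ^ q / |h| ^ E) := mul_comm _ _


/-- Anisotropic fractional Poincaré inequality: the `L^{p_i}` norm is controlled by the sum of
the normalized directional Gagliardo seminorms `[u]_{s_j,p_j,j}^{1/p_j}`. -/
theorem anisotropic_poincare (n : ℕ) (hn : 1 ≤ n) (Ω : Set (Fin n → ℝ))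
    (hΩopen : IsOpen Ω) (hΩbdd : Bornology.IsBounded Ω)
    (s p : Fin n → ℝ) (hs : ∀ j, 0 < s j ∧ s j < 1) (hp : ∀ j, 1 < p j) :
    ∃ C : ℝ, 0 < C ∧
      ∀ (u : (Fin n → ℝ) → ℝ), Measurable u →
        (∀ᵐ x : Fin n → ℝ, x ∉ Ω → u x = 0) →
        (∀ j : Fin n,
          (∫⁻ x : Fin n → ℝ, ∫⁻ h : ℝ,
            ENNReal.ofReal
              (|u (x + h • (Pi.single j 1 : Fin n → ℝ)) - u x| ^ (p j) /
                |h| ^ (1 + s j * p j))) < ⊤) →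
        ∀ i : Fin n,
          (∫⁻ x : Fin n → ℝ, ENNReal.ofReal (|u x| ^ (p i))) ^ (1 / p i) ≤
            ENNReal.ofReal C *
              ∑ j : Fin n,
                (ENNReal.ofReal ((1 - s j) * s j) *
                  ∫⁻ x : Fin n → ℝ, ∫⁻ h : ℝ,
                    ENNReal.ofReal
                      (|u (x + h • (Pi.single j 1 : Fin n → ℝ)) - u x| ^ (p j) /
                        |h| ^ (1 + s j * p j))) ^ (1 / p j) := by
  obtain ⟨r, hr⟩ := hΩbdd.subset_ball 0
  set R : ℝ := max r 1 with hRdef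
  have hR : 0 < R := lt_of_lt_of_le one_pos (le_max_right _ _)
  have hΩR : Ω ⊆ Metric.ball 0 R := hr.trans (Metric.ball_subset_ball (le_max_left _ _))
  set A : Fin n → ℝ := fun j =>
    ((3 * R) ^ (1 + s j * p j) / R / ((1 - s j) * s j)) ^ (1 / p j) with hA
  have hApos : ∀ j, 0 ≤ A j := by
    intro j
    apply Real.rpow_nonneg
    have h1 : 0 < (1 - s j) * s j := mul_pos (by linarith [(hs j).2]) (hs j).1
    positivity
  set C : ℝ := 1 + ∑ j, A j with hC
  have hCpos : 0 < C := by
    have : 0 ≤ ∑ j, A j := Finset.sum_nonneg fun j _ => hApos j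
    linarith
  have hCA : ∀ j, A j ≤ C := by
    intro j
    have h1 : A j ≤ ∑ k, A k :=
      Finset.single_le_sum (fun k _ => hApos k) (Finset.mem_univ j)
    linarith
  refine ⟨C, hCpos, ?_⟩
  intro u hu hue _hfin i
  have hpi : 0 < p i := lt_trans one_pos (hp i)
  have hci : 0 < (1 - s i) * s i := mul_pos (by linarith [(hs i).2]) (hs i).1
  have hKpos : 0 < (3 * R) ^ (1 + s i * p i) / R :=
    div_pos (Real.rpow_pos_of_pos (by linarith) _) hR
  set J : ENNReal := ∫⁻ x : Fin n → ℝ, ∫⁻ h : ℝ,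
    ENNReal.ofReal
      (|u (x + h • (Pi.single i 1 : Fin n → ℝ)) - u x| ^ (p i) /
        |h| ^ (1 + s i * p i)) with hJ
  have hcore := core_estimate i R hR Ω hΩopen.measurableSet hΩR (s i) (p i)
    (hs i).1 hpi u hu hue
  set t : ℝ := 1 / p i with ht
  have htpos : 0 < t := by positivity
  have hconst : (ENNReal.ofReal ((3 * R) ^ (1 + s i * p i) / R)) ^ t ≤
      ENNReal.ofReal C * (ENNReal.ofReal ((1 - s i) * s i)) ^ t := by
    rw [ENNReal.ofReal_rpow_of_pos hKpos, ENNReal.ofReal_rpow_of_pos hci,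
      ← ENNReal.ofReal_mul hCpos.le]
    apply ENNReal.ofReal_le_ofReal
    have hAi : A i * ((1 - s i) * s i) ^ t = ((3 * R) ^ (1 + s i * p i) / R) ^ t := by
      rw [hA, ← Real.mul_rpow (by positivity) hci.le, div_mul_cancel₀ _ hci.ne']
    calc ((3 * R) ^ (1 + s i * p i) / R) ^ t = A i * ((1 - s i) * s i) ^ t := hAi.symm
      _ ≤ C * ((1 - s i) * s i) ^ t :=
          mul_le_mul_of_nonneg_right (hCA i) (Real.rpow_nonneg hci.le t)
  calc (∫⁻ x : Fin n → ℝ, ENNReal.ofReal (|u x| ^ (p i))) ^ t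
      ≤ (ENNReal.ofReal ((3 * R) ^ (1 + s i * p i) / R) * J) ^ t :=
        ENNReal.rpow_le_rpow hcore htpos.le
    _ = (ENNReal.ofReal ((3 * R) ^ (1 + s i * p i) / R)) ^ t * J ^ t :=
        ENNReal.mul_rpow_of_nonneg _ _ htpos.le
    _ ≤ (ENNReal.ofReal C * (ENNReal.ofReal ((1 - s i) * s i)) ^ t) * J ^ t :=
        mul_le_mul_left hconst _
    _ = ENNReal.ofReal C * (ENNReal.ofReal ((1 - s i) * s i) * J) ^ t := by
        rw [ENNReal.mul_rpow_of_nonneg _ _ htpos.le, mul_assoc]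
    _ ≤ ENNReal.ofReal C * ∑ j : Fin n,
          (ENNReal.ofReal ((1 - s j) * s j) *
            ∫⁻ x : Fin n → ℝ, ∫⁻ h : ℝ,
              ENNReal.ofReal
                (|u (x + h • (Pi.single j 1 : Fin n → ℝ)) - u x| ^ (p j) /
                  |h| ^ (1 + s j * p j))) ^ (1 / p j) := by
        apply mul_le_mul_right
        exact Finset.single_le_sum (f := fun j => (ENNReal.ofReal ((1 - s j) * s j) *
          ∫⁻ x : Fin n → ℝ, ∫⁻ h : ℝ,
            ENNReal.ofReal
              (|u (x + h • (Pi.single j 1 : Fin n → ℝ)) - u x| ^ (p j) /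
                |h| ^ (1 + s j * p j))) ^ (1 / p j))
          (fun j _ => zero_le) (Finset.mem_univ i)
end

section
/- Comparison principle for the anisotropic fractional pseudo p-Laplacian. Let n ≥ 1, let Ω ⊂ ℝⁿ be a bounded open set, and let s₁,…,sₙ ∈ (0,1) and p₁,…,pₙ ∈ (1,∞) be real numbers. Let u, v : ℝⁿ → ℝ be measurable functions such that for every i ∈ {1,…,n} the directional Gagliardo energies ∫_{ℝⁿ} ∫_{ℝ} |w(x + h·eᵢ) − w(x)|^{pᵢ} / |h|^{1+sᵢpᵢ} dh dx are finite for w = u and w = v, and such that u(x) ≤ v(x) for almost every x ∈ ℝⁿ \ Ω. Assume that for every measurable function φ : ℝⁿ → ℝ with φ ≥ 0 almost everywhere, φ = 0 almost everywhere on ℝⁿ \ Ω, and finite directional Gagliardo energies for all i (so that by Hölder's inequality all the integrals below converge absolutely), one has Σ_{i=1}^{n} ∫_{ℝⁿ} ∫_{ℝ} Φ_{pᵢ}(v(x + h·eᵢ) − v(x))·(φ(x + h·eᵢ) − φ(x)) / |h|^{1+sᵢpᵢ} dh dx ≥ Σ_{i=1}^{n} ∫_{ℝⁿ} ∫_{ℝ}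 Φ_{pᵢ}(u(x + h·eᵢ) − u(x))·(φ(x + h·eᵢ) − φ(x)) / |h|^{1+sᵢpᵢ} dh dx. Then u(x) ≤ v(x) for almost every x ∈ ℝⁿ. -/
open MeasureTheory Metric

/-- `Φ_p(t) = |t|^{p-2} t`. -/
noncomputable def Phi (p t : ℝ) : ℝ := |t| ^ (p - 2) * t

lemma Phi_neg (p t : ℝ) : Phi p (-t) = -Phi p t := by
  simp [Phi, abs_neg]

lemma Phi_pos_eq {p t : ℝ} (ht : 0 < t) : Phi p t = t ^ (p - 1) := by
  rw [Phi, abs_of_pos ht, show p - 1 = (p-2) + 1 by ring,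
    Real.rpow_add ht, Real.rpow_one]

lemma Phi_strictMono {p : ℝ} (hp : 1 < p) : StrictMono (Phi p) := by
  have hpos : ∀ t : ℝ, 0 < t → 0 < Phi p t := by
    intro t ht
    rw [Phi_pos_eq ht]; exact Real.rpow_pos_of_pos ht _
  have key : ∀ a b : ℝ, 0 ≤ a → a < b → Phi p a < Phi p b := by
    intro a b ha hab
    rcases eq_or_lt_of_le ha with h | h
    · rw [← h]; simpa [Phi] using hpos b (h ▸ hab)
    · rw [Phi_pos_eq h, Phi_pos_eq (h.trans hab)]
      exact Real.rpow_lt_rpow h.le hab (by linarith)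
  intro a b hab
  rcases le_or_gt 0 a with ha | ha
  · exact key a b ha hab
  · rcases le_or_gt b 0 with hb | hb
    · have := key (-b) (-a) (by linarith) (by linarith)
      rw [Phi_neg, Phi_neg] at this; linarith
    · have h1 : Phi p a < 0 := by
        have := hpos (-a) (by linarith); rw [Phi_neg] at this; linarith
      exact h1.trans (hpos b hb)

lemma abs_Phi {p : ℝ} (hp : 1 < p) (t : ℝ) : |Phi p t| = |t| ^ (p - 1) := by
  rcases eq_or_ne t 0 with rfl | ht
  · simp [Phi, Real.zero_rpow (by linarith : p - 1 ≠ 0)]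
  · have h : (0:ℝ) < |t| := abs_pos.mpr ht
    rw [Phi, abs_mul, abs_of_nonneg (Real.rpow_nonneg (abs_nonneg t) _),
      show p - 1 = (p-2) + 1 by ring, Real.rpow_add h, Real.rpow_one]

lemma measurable_Phi (p : ℝ) : Measurable (Phi p) :=
  ((measurable_id.abs).pow_const _).mul measurable_id

/-- Key sign lemma. -/
lemma key_sign {p a b c d : ℝ} (hp : 1 < p) (habcd : a - b = c - d)
    (hne : max c 0 ≠ max d 0) :
    0 < (Phi p a - Phi p b) * (max c 0 - max d 0) := by
  rcases lt_or_gt_of_ne hne with h | h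
  · have hd : 0 < max d 0 := lt_of_le_of_lt (le_max_right c 0) h
    have hd' : max d 0 = d := max_eq_left (by
      by_contra hcon; push_neg at hcon
      simp [max_eq_right hcon.le] at hd)
    have hcd : c < d := by
      have : c ≤ max c 0 := le_max_left _ _
      linarith [hd' ▸ h, this]
    have hab : a < b := by linarith
    have := Phi_strictMono hp hab
    exact mul_pos_of_neg_of_neg (by linarith) (by linarith)
  · have hc : 0 < max c 0 := lt_of_le_of_lt (le_max_right d 0) h
    have hc' : max c 0 = c := max_eq_left (by
      by_contra hcon; push_neg at hcon
      simp [max_eq_right hcon.le] at hc)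
    have hcd : d < c := by
      have : d ≤ max d 0 := le_max_left _ _
      linarith [hc' ▸ h, this]
    have hab : b < a := by linarith
    have := Phi_strictMono hp hab
    exact mul_pos (by linarith) (by linarith)

lemma diff_repr (p C ux uy vx vy : ℝ) :
    Phi p (uy - ux) * (max (uy - vy) 0 - max (ux - vx) 0) / C
      - Phi p (vy - vx) * (max (uy - vy) 0 - max (ux - vx) 0) / C
    = ((Phi p (uy - ux) - Phi p (vy - vx)) * (max (uy - vy) 0 - max (ux - vx) 0)) / C := by
  ring

lemma diff_nonneg {p : ℝ} (hp : 1 < p) {C : ℝ} (hC : 0 ≤ C) (ux uy vx vy : ℝ) :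
    0 ≤ ((Phi p (uy - ux) - Phi p (vy - vx)) * (max (uy - vy) 0 - max (ux - vx) 0)) / C := by
  by_cases hm : max (uy - vy) 0 = max (ux - vx) 0
  · simp [hm]
  · exact div_nonneg (key_sign hp (by ring) hm).le hC

lemma diff_zero_imp {p : ℝ} (hp : 1 < p) {C : ℝ} (hC : 0 < C) {ux uy vx vy : ℝ}
    (hz : ((Phi p (uy - ux) - Phi p (vy - vx)) * (max (uy - vy) 0 - max (ux - vx) 0)) / C = 0) :
    max (uy - vy) 0 = max (ux - vx) 0 := by
  by_contra hm
  have := key_sign hp (show (uy - ux) - (vy - vx) = (uy - vy) - (ux - vx) by ring) hm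
  have : 0 < ((Phi p (uy - ux) - Phi p (vy - vx)) * (max (uy - vy) 0 - max (ux - vx) 0)) / C :=
    div_pos this hC
  linarith

lemma two_rpow_bound' {a b p : ℝ} (ha : 0 ≤ a) (hb : 0 ≤ b) (hp : 0 ≤ p) :
    (a + b) ^ p ≤ 2 ^ p * (a ^ p + b ^ p) := by
  have h1 : a + b ≤ 2 * max a b := by
    rcases max_cases a b with ⟨h, h'⟩ | ⟨h, h'⟩ <;> rw [h] <;> linarith
  have h2 : (a + b) ^ p ≤ (2 * max a b) ^ p :=
    Real.rpow_le_rpow (by linarith) h1 hp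
  have h3 : (2 * max a b) ^ p = 2 ^ p * (max a b) ^ p :=
    Real.mul_rpow (by norm_num) (le_max_of_le_left ha)
  have h4 : (max a b) ^ p ≤ a ^ p + b ^ p := by
    rcases max_cases a b with ⟨h, _⟩ | ⟨h, _⟩ <;> rw [h]
    · nlinarith [Real.rpow_nonneg hb p]
    · nlinarith [Real.rpow_nonneg ha p]
  calc (a+b)^p ≤ 2^p * (max a b)^p := h3 ▸ h2
    _ ≤ 2^p * (a^p + b^p) := by
        have : (0:ℝ) ≤ 2^p := Real.rpow_nonneg (by norm_num) p
        nlinarith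

section aux
variable {n : ℕ} (c : Fin n → ℝ)

lemma measurable_shift {w : (Fin n → ℝ) → ℝ} (hw : Measurable w) :
    Measurable (fun z : (Fin n → ℝ) × ℝ => w (z.1 + z.2 • c)) :=
  hw.comp (measurable_fst.add (measurable_snd.smul_const c))

lemma measurable_gagliardo {w : (Fin n → ℝ) → ℝ} (hw : Measurable w) (p κ : ℝ) :
    Measurable (fun z : (Fin n → ℝ) × ℝ =>
      ENNReal.ofReal (|w (z.1 + z.2 • c) - w z.1|^p / |z.2|^κ)) := by
  apply Measurable.ennreal_ofReal
  exact ((((measurable_shift c hw).sub (hw.comp measurable_fst)).abs.pow_const p).div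
    ((measurable_snd.abs).pow_const κ))

lemma measurable_gagliardo_slice {w : (Fin n → ℝ) → ℝ} (hw : Measurable w) (p κ : ℝ)
    (x : Fin n → ℝ) :
    Measurable (fun h : ℝ =>
      ENNReal.ofReal (|w (x + h • c) - w x|^p / |h|^κ)) := by
  apply Measurable.ennreal_ofReal
  exact (((hw.comp (measurable_const.add (measurable_id.smul_const c))).sub
    measurable_const).abs.pow_const p).div ((measurable_id.abs).pow_const κ)

lemma lintegral_gagliardo_eq {w : (Fin n → ℝ) → ℝ} (hw : Measurable w) (p κ : ℝ) :
    (∫⁻ z : (Fin n → ℝ) × ℝ,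
        ENNReal.ofReal (|w (z.1 + z.2 • c) - w z.1|^p / |z.2|^κ)
        ∂((volume : Measure (Fin n → ℝ)).prod (volume : Measure ℝ)))
      = ∫⁻ x : Fin n → ℝ, ∫⁻ h : ℝ,
          ENNReal.ofReal (|w (x + h • c) - w x|^p / |h|^κ) := by
  rw [MeasureTheory.lintegral_prod _ ((measurable_gagliardo c hw p κ).aemeasurable)]

lemma integrable_aux {p κ : ℝ} (hp : 1 < p)
    {w g : (Fin n → ℝ) → ℝ} (hw : Measurable w) (hg : Measurable g)
    (hwfin : (∫⁻ x : Fin n → ℝ, ∫⁻ h : ℝ,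
        ENNReal.ofReal (|w (x + h • c) - w x|^p / |h|^κ)) < ⊤)
    (hgfin : (∫⁻ x : Fin n → ℝ, ∫⁻ h : ℝ,
        ENNReal.ofReal (|g (x + h • c) - g x|^p / |h|^κ)) < ⊤) :
    Integrable (fun z : (Fin n → ℝ) × ℝ =>
        Phi p (w (z.1 + z.2 • c) - w z.1) * (g (z.1 + z.2 • c) - g z.1) / |z.2|^κ)
      ((volume : Measure (Fin n → ℝ)).prod (volume : Measure ℝ)) := by
  have hmeas : Measurable (fun z : (Fin n → ℝ) × ℝ =>
      Phi p (w (z.1 + z.2 • c) - w z.1) * (g (z.1 + z.2 • c) - g z.1) / |z.2|^κ) := by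
    exact (((measurable_Phi p).comp ((measurable_shift c hw).sub (hw.comp measurable_fst))).mul
      ((measurable_shift c hg).sub (hg.comp measurable_fst))).div
      ((measurable_snd.abs).pow_const κ)
  refine ⟨hmeas.aestronglyMeasurable, ?_⟩
  rw [hasFiniteIntegral_iff_norm]
  have hq : p.HolderConjugate (p / (p-1)) := (Real.holderConjugate_iff_eq_conjExponent hp).2 rfl
  have hbound : ∀ z : (Fin n → ℝ) × ℝ,
      ENNReal.ofReal ‖Phi p (w (z.1 + z.2 • c) - w z.1) *
          (g (z.1 + z.2 • c) - g z.1) / |z.2|^κ‖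
        ≤ ENNReal.ofReal (|w (z.1 + z.2 • c) - w z.1|^p / |z.2|^κ)
          + ENNReal.ofReal (|g (z.1 + z.2 • c) - g z.1|^p / |z.2|^κ) := by
    intro z
    set A := w (z.1 + z.2 • c) - w z.1
    set B := g (z.1 + z.2 • c) - g z.1
    set C := |z.2|^κ with hC
    have hC0 : 0 ≤ C := Real.rpow_nonneg (abs_nonneg _) _
    have h1 : ‖Phi p A * B / C‖ = |Phi p A| * |B| / C := by
      rw [Real.norm_eq_abs, abs_div, abs_mul, abs_of_nonneg hC0]
    have hyoung : |Phi p A| * |B| ≤ |A|^p + |B|^p := by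
      rw [abs_Phi hp]
      have h2 : (|A|^(p-1)) * |B| ≤ (|A|^(p-1))^(p/(p-1)) / (p/(p-1)) + |B|^p / p :=
        Real.young_inequality_of_nonneg (Real.rpow_nonneg (abs_nonneg _) _)
          (abs_nonneg _) hq.symm
      have h3 : (|A|^(p-1))^(p/(p-1)) = |A|^p := by
        rw [← Real.rpow_mul (abs_nonneg A)]
        congr 1
        rw [mul_comm]; exact div_mul_cancel₀ p (by linarith : p - 1 ≠ 0)
      rw [h3] at h2
      have hp1 : 1 ≤ p / (p-1) := hq.symm.lt.le
      have h4 : |A|^p / (p/(p-1)) ≤ |A|^p := by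
        apply div_le_self (Real.rpow_nonneg (abs_nonneg _) _) hp1
      have h5 : |B|^p / p ≤ |B|^p := by
        apply div_le_self (Real.rpow_nonneg (abs_nonneg _) _) hp.le
      linarith
    have h6 : |Phi p A| * |B| / C ≤ |A|^p / C + |B|^p / C := by
      rcases eq_or_lt_of_le hC0 with h | h
      · simp [← h]
      · rw [← add_div]
        gcongr
    calc ENNReal.ofReal ‖Phi p A * B / C‖
        ≤ ENNReal.ofReal (|A|^p / C + |B|^p / C) := by
          rw [h1]; exact ENNReal.ofReal_le_ofReal h6
      _ ≤ _ := ENNReal.ofReal_add_le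
  calc (∫⁻ z, ENNReal.ofReal ‖Phi p (w (z.1 + z.2 • c) - w z.1) *
          (g (z.1 + z.2 • c) - g z.1) / |z.2|^κ‖
        ∂((volume : Measure (Fin n → ℝ)).prod volume))
      ≤ ∫⁻ z, (ENNReal.ofReal (|w (z.1 + z.2 • c) - w z.1|^p / |z.2|^κ)
          + ENNReal.ofReal (|g (z.1 + z.2 • c) - g z.1|^p / |z.2|^κ))
        ∂((volume : Measure (Fin n → ℝ)).prod volume) := lintegral_mono hbound
    _ = (∫⁻ z, ENNReal.ofReal (|w (z.1 + z.2 • c) - w z.1|^p / |z.2|^κ)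
          ∂((volume : Measure (Fin n → ℝ)).prod volume))
        + ∫⁻ z, ENNReal.ofReal (|g (z.1 + z.2 • c) - g z.1|^p / |z.2|^κ)
          ∂((volume : Measure (Fin n → ℝ)).prod volume) :=
        lintegral_add_left (measurable_gagliardo c hw p κ) _
    _ < ⊤ := by
        rw [lintegral_gagliardo_eq c hw p κ, lintegral_gagliardo_eq c hg p κ]
        exact ENNReal.add_lt_top.mpr ⟨hwfin, hgfin⟩

lemma gagliardo_max_fin {p κ : ℝ} (hp : 1 < p)
    {u v : (Fin n → ℝ) → ℝ} (hu : Measurable u) (hv : Measurable v)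
    (hufin : (∫⁻ x : Fin n → ℝ, ∫⁻ h : ℝ,
        ENNReal.ofReal (|u (x + h • c) - u x|^p / |h|^κ)) < ⊤)
    (hvfin : (∫⁻ x : Fin n → ℝ, ∫⁻ h : ℝ,
        ENNReal.ofReal (|v (x + h • c) - v x|^p / |h|^κ)) < ⊤) :
    (∫⁻ x : Fin n → ℝ, ∫⁻ h : ℝ,
        ENNReal.ofReal (|(fun y => max (u y - v y) 0) (x + h • c)
          - (fun y => max (u y - v y) 0) x|^p / |h|^κ)) < ⊤ := by
  set φ : (Fin n → ℝ) → ℝ := fun y => max (u y - v y) 0 with hφdef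
  set k : ENNReal := ENNReal.ofReal (2^p) with hkdef
  have hkt : k ≠ ⊤ := ENNReal.ofReal_ne_top
  have hbound : ∀ (x : Fin n → ℝ) (h : ℝ),
      ENNReal.ofReal (|φ (x + h • c) - φ x|^p / |h|^κ)
        ≤ k * ENNReal.ofReal (|u (x + h • c) - u x|^p / |h|^κ)
          + k * ENNReal.ofReal (|v (x + h • c) - v x|^p / |h|^κ) := by
    intro x h
    set A := |u (x + h • c) - u x|
    set B := |v (x + h • c) - v x|
    set C := |h|^κ with hC
    have hC0 : (0:ℝ) ≤ C := Real.rpow_nonneg (abs_nonneg _) _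
    have h0 : |φ (x + h • c) - φ x| ≤ A + B := by
      calc |φ (x + h • c) - φ x|
          ≤ |(u (x + h • c) - v (x + h • c)) - (u x - v x)| :=
            abs_max_sub_max_le_abs _ _ _
        _ = |(u (x + h • c) - u x) - (v (x + h • c) - v x)| := by ring_nf
        _ ≤ A + B := abs_sub _ _
    have h1 : |φ (x + h • c) - φ x|^p ≤ 2^p * (A^p + B^p) :=
      (Real.rpow_le_rpow (abs_nonneg _) h0 (by linarith)).trans
        (two_rpow_bound' (abs_nonneg _) (abs_nonneg _) (by linarith))
    have h2 : |φ (x + h • c) - φ x|^p / C ≤ 2^p * (A^p / C) + 2^p * (B^p / C) := by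
      rcases eq_or_lt_of_le hC0 with hc | hc
      · simp [← hc]
      · rw [← mul_add, ← add_div, ← mul_div_assoc]
        gcongr
    calc ENNReal.ofReal (|φ (x + h • c) - φ x|^p / C)
        ≤ ENNReal.ofReal (2^p * (A^p / C) + 2^p * (B^p / C)) :=
          ENNReal.ofReal_le_ofReal h2
      _ ≤ ENNReal.ofReal (2^p * (A^p / C)) + ENNReal.ofReal (2^p * (B^p / C)) :=
          ENNReal.ofReal_add_le
      _ = k * ENNReal.ofReal (A^p / C) + k * ENNReal.ofReal (B^p / C) := by
          rw [ENNReal.ofReal_mul (Real.rpow_nonneg (by norm_num) p),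
            ENNReal.ofReal_mul (Real.rpow_nonneg (by norm_num) p)]
  have hmu : ∀ x : Fin n → ℝ, Measurable (fun h : ℝ =>
      ENNReal.ofReal (|u (x + h • c) - u x|^p / |h|^κ)) := fun x =>
    measurable_gagliardo_slice c hu p κ x
  have hmv : ∀ x : Fin n → ℝ, Measurable (fun h : ℝ =>
      ENNReal.ofReal (|v (x + h • c) - v x|^p / |h|^κ)) := fun x =>
    measurable_gagliardo_slice c hv p κ x
  have hMu : Measurable (fun x : Fin n → ℝ => ∫⁻ h : ℝ,
      ENNReal.ofReal (|u (x + h • c) - u x|^p / |h|^κ)) :=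
    Measurable.lintegral_prod_right (measurable_gagliardo c hu p κ)
  have hMv : Measurable (fun x : Fin n → ℝ => ∫⁻ h : ℝ,
      ENNReal.ofReal (|v (x + h • c) - v x|^p / |h|^κ)) :=
    Measurable.lintegral_prod_right (measurable_gagliardo c hv p κ)
  calc (∫⁻ x : Fin n → ℝ, ∫⁻ h : ℝ, ENNReal.ofReal (|φ (x + h • c) - φ x|^p / |h|^κ))
      ≤ ∫⁻ x : Fin n → ℝ, ∫⁻ h : ℝ,
          (k * ENNReal.ofReal (|u (x + h • c) - u x|^p / |h|^κ)
            + k * ENNReal.ofReal (|v (x + h • c) - v x|^p / |h|^κ)) :=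
        lintegral_mono fun x => lintegral_mono (hbound x)
    _ = ∫⁻ x : Fin n → ℝ,
          ((k * ∫⁻ h : ℝ, ENNReal.ofReal (|u (x + h • c) - u x|^p / |h|^κ))
            + (k * ∫⁻ h : ℝ, ENNReal.ofReal (|v (x + h • c) - v x|^p / |h|^κ))) := by
        refine lintegral_congr fun x => ?_
        rw [lintegral_add_left ((hmu x).const_mul k), lintegral_const_mul k (hmu x),
          lintegral_const_mul k (hmv x)]
    _ = k * (∫⁻ x : Fin n → ℝ, ∫⁻ h : ℝ,
            ENNReal.ofReal (|u (x + h • c) - u x|^p / |h|^κ))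
          + k * (∫⁻ x : Fin n → ℝ, ∫⁻ h : ℝ,
            ENNReal.ofReal (|v (x + h • c) - v x|^p / |h|^κ)) := by
        rw [lintegral_add_left (hMu.const_mul k), lintegral_const_mul k hMu,
          lintegral_const_mul k hMv]
    _ < ⊤ := by
        apply ENNReal.add_lt_top.mpr
        exact ⟨ENNReal.mul_lt_top (Ne.lt_top hkt) hufin,
          ENNReal.mul_lt_top (Ne.lt_top hkt) hvfin⟩
end aux

lemma ae_zero_of_invariant {n : ℕ} (hn : 1 ≤ n) (Ω : Set (Fin n → ℝ))
    (hΩbdd : Bornology.IsBounded Ω)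
    (φ : (Fin n → ℝ) → ℝ) (hφ : Measurable φ)
    (hzero : ∀ᵐ x : Fin n → ℝ, x ∉ Ω → φ x = 0)
    (htrans : ∀ i : Fin n, ∀ᵐ z : (Fin n → ℝ) × ℝ,
      φ (z.1 + z.2 • (Pi.single i 1 : Fin n → ℝ)) = φ z.1) :
    ∀ᵐ x : Fin n → ℝ, φ x = 0 := by
  haveI : Nonempty (Fin n) := ⟨⟨0, hn⟩⟩
  set T : Set (Fin n → ℝ) := {z | ∀ᵐ x : Fin n → ℝ, φ (x + z) = φ x} with hTdef
  have hT0 : (0 : Fin n → ℝ) ∈ T := by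
    show ∀ᵐ x : Fin n → ℝ, φ (x + 0) = φ x
    simp
  have hTadd : ∀ z₁ z₂ : Fin n → ℝ, z₁ ∈ T → z₂ ∈ T → z₁ + z₂ ∈ T := by
    intro z₁ z₂ h1 h2
    have mp := (measurePreserving_add_right (volume : Measure (Fin n → ℝ))
      z₂).quasiMeasurePreserving
    have h1' : ∀ᵐ x : Fin n → ℝ, φ (x + z₂ + z₁) = φ (x + z₂) := mp.ae h1
    have h2' : ∀ᵐ x : Fin n → ℝ, φ (x + z₂) = φ x := h2
    filter_upwards [h1', h2'] with x hx hx2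
    have he : x + (z₁ + z₂) = x + z₂ + z₁ := by abel
    rw [he, hx, hx2]
  have hB : ∀ i : Fin n, ∀ᵐ h : ℝ, (h • (Pi.single i 1 : Fin n → ℝ)) ∈ T := by
    intro i
    have hmeas : MeasurableSet {z : (Fin n → ℝ) × ℝ |
        φ (z.1 + z.2 • (Pi.single i 1 : Fin n → ℝ)) = φ z.1} := by
      apply measurableSet_eq_fun
      · exact hφ.comp (measurable_fst.add (measurable_snd.smul_const _))
      · exact hφ.comp measurable_fst
    have h := htrans i
    rw [Measure.volume_eq_prod, Measure.ae_prod_iff_ae_ae hmeas] at h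
    exact (Measure.ae_ae_comm hmeas).mp h
  have hN : ∀ i : Fin n, ∃ N : Set ℝ, MeasurableSet N ∧ volume N = 0 ∧
      ∀ h : ℝ, h ∉ N → (h • (Pi.single i 1 : Fin n → ℝ)) ∈ T := by
    intro i
    refine ⟨toMeasurable volume {h : ℝ | ¬ (h • (Pi.single i 1 : Fin n → ℝ)) ∈ T},
      measurableSet_toMeasurable _ _, ?_, ?_⟩
    · rw [measure_toMeasurable]; exact hB i
    · intro h hh
      by_contra hc
      exact hh (subset_toMeasurable _ _ hc)
  choose N hNmeas hNnull hNmem using hN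
  set S : Set (Fin n → ℝ) := {z | ∀ i, z i ∉ N i} with hSdef
  have hST : ∀ z ∈ S, z ∈ T := by
    intro z hz
    have hrep : z = ∑ i : Fin n, (z i) • (Pi.single i 1 : Fin n → ℝ) := by
      funext j
      rw [Finset.sum_apply]
      simp [Pi.single_apply]
    rw [hrep]
    refine Finset.sum_induction _ (· ∈ T) hTadd hT0 ?_
    intro i _
    exact hNmem i (z i) (hz i)
  have hScnull : volume Sᶜ = 0 := by
    have hsub : Sᶜ ⊆ ⋃ i : Fin n, {z : Fin n → ℝ | z i ∈ N i} := by
      intro z hz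
      simp only [hSdef, Set.mem_compl_iff, Set.mem_setOf_eq, not_forall, not_not] at hz
      obtain ⟨i, hi⟩ := hz
      exact Set.mem_iUnion.mpr ⟨i, hi⟩
    refine measure_mono_null hsub (measure_iUnion_null fun i => ?_)
    have : {z : Fin n → ℝ | z i ∈ N i} =
        Set.pi Set.univ (fun j => if j = i then N i else Set.univ) := by
      ext z
      simp only [Set.mem_setOf_eq, Set.mem_pi, Set.mem_univ, forall_true_left]
      constructor
      · intro h j; split
        · subst ‹j = i›; exact h
        · trivial
      · intro h; have := h i; simpa using this
    rw [this, volume_pi_pi]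
    exact Finset.prod_eq_zero (Finset.mem_univ i) (by simp [hNnull i])
  obtain ⟨R, hR⟩ := hΩbdd.subset_closedBall 0
  set R' : ℝ := max R 0 with hR'def
  have hRR' : Ω ⊆ closedBall 0 R' := hR.trans (closedBall_subset_closedBall (le_max_left _ _))
  set M : ℝ := 2 * R' + 1 with hMdef
  have hM0 : 0 < M := by positivity
  have hUopen : IsOpen {z : Fin n → ℝ | M < ‖z‖} :=
    isOpen_lt continuous_const continuous_norm
  have hUne : {z : Fin n → ℝ | M < ‖z‖}.Nonempty := by
    refine ⟨fun _ => M + 1, ?_⟩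
    simp only [Set.mem_setOf_eq]
    rw [pi_norm_const (M+1)]
    rw [Real.norm_eq_abs, abs_of_pos (by linarith)]
    linarith
  have hUpos : 0 < volume {z : Fin n → ℝ | M < ‖z‖} :=
    hUopen.measure_pos volume hUne
  have hSU : (S ∩ {z : Fin n → ℝ | M < ‖z‖}).Nonempty := by
    by_contra hc
    rw [Set.not_nonempty_iff_eq_empty] at hc
    have : {z : Fin n → ℝ | M < ‖z‖} ⊆ Sᶜ := by
      intro z hz
      by_contra hzS
      rw [Set.notMem_compl_iff] at hzS
      exact Set.eq_empty_iff_forall_notMem.mp hc z ⟨hzS, hz⟩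
    exact absurd (measure_mono_null this hScnull) hUpos.ne'
  obtain ⟨z, hzS, hzM⟩ := hSU
  have hzT : z ∈ T := hST z hzS
  have hz2 : ∀ᵐ x : Fin n → ℝ, (x + z ∉ Ω → φ (x + z) = 0) :=
    ((measurePreserving_add_right (volume : Measure (Fin n → ℝ))
      z).quasiMeasurePreserving).ae hzero
  filter_upwards [hzT, hz2, hzero] with x h1 h2 h0
  by_cases hx : x ∈ Ω
  · have hxn : ‖x‖ ≤ R' := by simpa [mem_closedBall, dist_zero_right] using hRR' hx
    have hxzn : x + z ∉ Ω := by
      intro hc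
      have h3 : ‖x + z‖ ≤ R' := by simpa [mem_closedBall, dist_zero_right] using hRR' hc
      have h4 : ‖z‖ ≤ ‖x + z‖ + ‖x‖ := by
        calc ‖z‖ = ‖(x + z) - x‖ := by congr 1; abel
        _ ≤ ‖x + z‖ + ‖x‖ := norm_sub_le _ _
      simp only [Set.mem_setOf_eq] at hzM
      rw [hMdef] at hzM
      linarith
    rw [← h1]
    exact h2 hxzn
  · exact h0 hx

/-- Comparison principle for the anisotropic fractional pseudo p-Laplacian. -/
theorem comparison_principle_anisotropic (n : ℕ) (hn : 1 ≤ n)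
    (Ω : Set (Fin n → ℝ)) (hΩopen : IsOpen Ω) (hΩbdd : Bornology.IsBounded Ω)
    (s p : Fin n → ℝ) (hs : ∀ i, 0 < s i ∧ s i < 1) (hp : ∀ i, 1 < p i)
    (u v : (Fin n → ℝ) → ℝ) (hu : Measurable u) (hv : Measurable v)
    (hufin : ∀ i : Fin n,
      (∫⁻ x : Fin n → ℝ, ∫⁻ h : ℝ,
        ENNReal.ofReal
          (|u (x + h • (Pi.single i 1 : Fin n → ℝ)) - u x| ^ (p i) /
            |h| ^ (1 + s i * p i))) < ⊤)
    (hvfin : ∀ i : Fin n,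
      (∫⁻ x : Fin n → ℝ, ∫⁻ h : ℝ,
        ENNReal.ofReal
          (|v (x + h • (Pi.single i 1 : Fin n → ℝ)) - v x| ^ (p i) /
            |h| ^ (1 + s i * p i))) < ⊤)
    (hbdry : ∀ᵐ x : Fin n → ℝ, x ∉ Ω → u x ≤ v x)
    (hweak : ∀ φ : (Fin n → ℝ) → ℝ, Measurable φ →
      (∀ᵐ x : Fin n → ℝ, 0 ≤ φ x) →
      (∀ᵐ x : Fin n → ℝ, x ∉ Ω → φ x = 0) →
      (∀ i : Fin n,
        (∫⁻ x : Fin n → ℝ, ∫⁻ h : ℝ,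
          ENNReal.ofReal
            (|φ (x + h • (Pi.single i 1 : Fin n → ℝ)) - φ x| ^ (p i) /
              |h| ^ (1 + s i * p i))) < ⊤) →
      ∑ i : Fin n,
        ∫ x : Fin n → ℝ, ∫ h : ℝ,
          Phi (p i) (u (x + h • (Pi.single i 1 : Fin n → ℝ)) - u x) *
            (φ (x + h • (Pi.single i 1 : Fin n → ℝ)) - φ x) / |h| ^ (1 + s i * p i)
        ≤ ∑ i : Fin n,
        ∫ x : Fin n → ℝ, ∫ h : ℝ,
          Phi (p i) (v (x + h • (Pi.single i 1 : Fin n → ℝ)) - v x) *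
            (φ (x + h • (Pi.single i 1 : Fin n → ℝ)) - φ x) / |h| ^ (1 + s i * p i)) :
    ∀ᵐ x : Fin n → ℝ, u x ≤ v x := by
  classical
  set φ : (Fin n → ℝ) → ℝ := fun y => max (u y - v y) 0 with hφdef
  have hφmeas : Measurable φ := (hu.sub hv).max measurable_const
  have hφnn : ∀ᵐ x : Fin n → ℝ, 0 ≤ φ x :=
    Filter.Eventually.of_forall fun x => le_max_right _ _
  have hφ0 : ∀ᵐ x : Fin n → ℝ, x ∉ Ω → φ x = 0 := by
    filter_upwards [hbdry] with x hx hxΩ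
    exact max_eq_right (sub_nonpos.mpr (hx hxΩ))
  have hφfin : ∀ i : Fin n,
      (∫⁻ x : Fin n → ℝ, ∫⁻ h : ℝ,
        ENNReal.ofReal
          (|φ (x + h • (Pi.single i 1 : Fin n → ℝ)) - φ x| ^ (p i) /
            |h| ^ (1 + s i * p i))) < ⊤ :=
    fun i => gagliardo_max_fin (Pi.single i 1) (hp i) hu hv (hufin i) (hvfin i)
  have hw := hweak φ hφmeas hφnn hφ0 hφfin
  -- convert iterated integrals to product integrals
  have hintu : ∀ i : Fin n, Integrable (fun z : (Fin n → ℝ) × ℝ =>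
      Phi (p i) (u (z.1 + z.2 • (Pi.single i 1 : Fin n → ℝ)) - u z.1) *
        (φ (z.1 + z.2 • (Pi.single i 1 : Fin n → ℝ)) - φ z.1) / |z.2| ^ (1 + s i * p i))
      ((volume : Measure (Fin n → ℝ)).prod volume) :=
    fun i => integrable_aux (Pi.single i 1) (hp i) hu hφmeas (hufin i) (hφfin i)
  have hintv : ∀ i : Fin n, Integrable (fun z : (Fin n → ℝ) × ℝ =>
      Phi (p i) (v (z.1 + z.2 • (Pi.single i 1 : Fin n → ℝ)) - v z.1) *
        (φ (z.1 + z.2 • (Pi.single i 1 : Fin n → ℝ)) - φ z.1) / |z.2| ^ (1 + s i * p i))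
      ((volume : Measure (Fin n → ℝ)).prod volume) :=
    fun i => integrable_aux (Pi.single i 1) (hp i) hv hφmeas (hvfin i) (hφfin i)
  have hequ : ∀ i : Fin n,
      (∫ x : Fin n → ℝ, ∫ h : ℝ,
        Phi (p i) (u (x + h • (Pi.single i 1 : Fin n → ℝ)) - u x) *
          (φ (x + h • (Pi.single i 1 : Fin n → ℝ)) - φ x) / |h| ^ (1 + s i * p i))
      = ∫ z : (Fin n → ℝ) × ℝ,
          Phi (p i) (u (z.1 + z.2 • (Pi.single i 1 : Fin n → ℝ)) - u z.1) *
            (φ (z.1 + z.2 • (Pi.single i 1 : Fin n → ℝ)) - φ z.1) / |z.2| ^ (1 + s i * p i)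
          ∂((volume : Measure (Fin n → ℝ)).prod volume) :=
    fun i => MeasureTheory.integral_integral (hintu i)
  have heqv : ∀ i : Fin n,
      (∫ x : Fin n → ℝ, ∫ h : ℝ,
        Phi (p i) (v (x + h • (Pi.single i 1 : Fin n → ℝ)) - v x) *
          (φ (x + h • (Pi.single i 1 : Fin n → ℝ)) - φ x) / |h| ^ (1 + s i * p i))
      = ∫ z : (Fin n → ℝ) × ℝ,
          Phi (p i) (v (z.1 + z.2 • (Pi.single i 1 : Fin n → ℝ)) - v z.1) *
            (φ (z.1 + z.2 • (Pi.single i 1 : Fin n → ℝ)) - φ z.1) / |z.2| ^ (1 + s i * p i)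
          ∂((volume : Measure (Fin n → ℝ)).prod volume) :=
    fun i => MeasureTheory.integral_integral (hintv i)
  rw [Finset.sum_congr rfl (fun i _ => hequ i), Finset.sum_congr rfl (fun i _ => heqv i)] at hw
  -- the difference integrands
  set d : Fin n → ((Fin n → ℝ) × ℝ) → ℝ := fun i z =>
    Phi (p i) (u (z.1 + z.2 • (Pi.single i 1 : Fin n → ℝ)) - u z.1) *
      (φ (z.1 + z.2 • (Pi.single i 1 : Fin n → ℝ)) - φ z.1) / |z.2| ^ (1 + s i * p i)
    - Phi (p i) (v (z.1 + z.2 • (Pi.single i 1 : Fin n → ℝ)) - v z.1) *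
      (φ (z.1 + z.2 • (Pi.single i 1 : Fin n → ℝ)) - φ z.1) / |z.2| ^ (1 + s i * p i)
    with hddef
  have hdint : ∀ i, Integrable (d i) ((volume : Measure (Fin n → ℝ)).prod volume) :=
    fun i => (hintu i).sub (hintv i)
  have hdnn : ∀ i, ∀ z : (Fin n → ℝ) × ℝ, 0 ≤ d i z := by
    intro i z
    have hC0 : (0:ℝ) ≤ |z.2| ^ (1 + s i * p i) := Real.rpow_nonneg (abs_nonneg _) _
    have := diff_nonneg (hp i) hC0 (u z.1) (u (z.1 + z.2 • (Pi.single i 1 : Fin n → ℝ)))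
      (v z.1) (v (z.1 + z.2 • (Pi.single i 1 : Fin n → ℝ)))
    rw [hddef]
    simp only [hφdef]
    rw [diff_repr]
    exact this
  have hdsum : ∑ i : Fin n, ∫ z, d i z ∂((volume : Measure (Fin n → ℝ)).prod volume) ≤ 0 := by
    have : ∀ i : Fin n, ∫ z, d i z ∂((volume : Measure (Fin n → ℝ)).prod volume)
        = (∫ z, Phi (p i) (u (z.1 + z.2 • (Pi.single i 1 : Fin n → ℝ)) - u z.1) *
            (φ (z.1 + z.2 • (Pi.single i 1 : Fin n → ℝ)) - φ z.1) / |z.2| ^ (1 + s i * p i)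
            ∂((volume : Measure (Fin n → ℝ)).prod volume))
          - ∫ z, Phi (p i) (v (z.1 + z.2 • (Pi.single i 1 : Fin n → ℝ)) - v z.1) *
            (φ (z.1 + z.2 • (Pi.single i 1 : Fin n → ℝ)) - φ z.1) / |z.2| ^ (1 + s i * p i)
            ∂((volume : Measure (Fin n → ℝ)).prod volume) :=
      fun i => integral_sub (hintu i) (hintv i)
    rw [Finset.sum_congr rfl fun i _ => this i, Finset.sum_sub_distrib]
    exact sub_nonpos.mpr hw
  have hdzero : ∀ i : Fin n,
      ∫ z, d i z ∂((volume : Measure (Fin n → ℝ)).prod volume) = 0 := by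
    intro i
    refine le_antisymm ?_ (integral_nonneg (hdnn i))
    calc ∫ z, d i z ∂((volume : Measure (Fin n → ℝ)).prod volume)
        ≤ ∑ j : Fin n, ∫ z, d j z ∂((volume : Measure (Fin n → ℝ)).prod volume) :=
          Finset.single_le_sum (f := fun j => ∫ z, d j z ∂((volume : Measure (Fin n → ℝ)).prod volume)) (fun j _ => integral_nonneg (hdnn j)) (Finset.mem_univ i)
      _ ≤ 0 := hdsum
  have hdae : ∀ i : Fin n,
      ∀ᵐ z ∂((volume : Measure (Fin n → ℝ)).prod volume), d i z = 0 := by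
    intro i
    have := (integral_eq_zero_iff_of_nonneg (hdnn i) (hdint i)).mp (hdzero i)
    filter_upwards [this] with z hz
    simpa using hz
  -- a.e. z.2 ≠ 0
  have hz2ne : ∀ᵐ z : (Fin n → ℝ) × ℝ ∂((volume : Measure (Fin n → ℝ)).prod volume),
      z.2 ≠ 0 := by
    rw [ae_iff]
    have hset : {z : (Fin n → ℝ) × ℝ | ¬ z.2 ≠ 0} = Set.univ ×ˢ ({0} : Set ℝ) := by
      ext ⟨a, b⟩
      simp [eq_comm]
    rw [hset, Measure.prod_prod]
    simp
  have htrans : ∀ i : Fin n, ∀ᵐ z : (Fin n → ℝ) × ℝ,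
      φ (z.1 + z.2 • (Pi.single i 1 : Fin n → ℝ)) = φ z.1 := by
    intro i
    rw [Measure.volume_eq_prod]
    filter_upwards [hdae i, hz2ne] with z h1 h2
    have hC : (0:ℝ) < |z.2| ^ (1 + s i * p i) :=
      Real.rpow_pos_of_pos (abs_pos.mpr h2) _
    rw [hddef] at h1
    simp only [hφdef] at h1 ⊢
    rw [diff_repr] at h1
    exact diff_zero_imp (hp i) hC h1
  have hfinal := ae_zero_of_invariant hn Ω hΩbdd φ hφmeas hφ0 htrans
  filter_upwards [hfinal] with x hx
  have : u x - v x ≤ 0 := by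
    have h := le_max_left (u x - v x) 0
    rw [hφdef] at hx
    simp only at hx
    linarith [hx ▸ h]
  linarith
end

section
/- Let p > 1 be a real number and let a, b ∈ ℝ with (a, b) ≠ (0, 0). Then the function t ↦ |a + t·(b − a)|^{p−2} is integrable on the interval [0, 1] and 0 < ∫₀¹ |a + t·(b − a)|^{p−2} dt. -/
open MeasureTheory Set

/-- `|x|^r` is interval integrable for `r > -1`. -/
lemma aux_intervalIntegrable_abs_rpow {r : ℝ} (hr : -1 < r) (a b : ℝ) :
    IntervalIntegrable (fun x : ℝ => |x| ^ r) volume a b := by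
  suffices h : ∀ c : ℝ, 0 ≤ c → IntervalIntegrable (fun x : ℝ => |x| ^ r) volume 0 c by
    have key : ∀ c : ℝ, IntervalIntegrable (fun x : ℝ => |x| ^ r) volume 0 c := by
      intro c
      rcases le_total 0 c with hc | hc
      · exact h c hc
      · rw [IntervalIntegrable.iff_comp_neg]
        simpa using h (-c) (by linarith)
    exact (key a).symm.trans (key b)
  intro c hc
  have h1 : IntervalIntegrable (fun x : ℝ => x ^ r) volume 0 c :=
    intervalIntegral.intervalIntegrable_rpow' hr
  rw [intervalIntegrable_iff] at h1 ⊢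
  refine h1.congr_fun ?_ measurableSet_uIoc
  intro x hx
  rw [uIoc_of_le hc] at hx
  show x ^ r = |x| ^ r
  rw [abs_of_pos hx.1]

/-- For `p > 1` and `(a, b) ≠ (0, 0)`, the function `t ↦ |a + t (b − a)|^{p−2}` is
integrable on `[0, 1]` and its integral is positive. -/
theorem Q_factor_integrable_pos (p : ℝ) (hp : 1 < p) (a b : ℝ)
    (hab : (a, b) ≠ ((0 : ℝ), (0 : ℝ))) :
    IntervalIntegrable (fun t : ℝ => |a + t * (b - a)| ^ (p - 2)) volume 0 1 ∧
      0 < ∫ t in (0 : ℝ)..1, |a + t * (b - a)| ^ (p - 2) := by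
  set c := b - a with hc
  have hr : -1 < p - 2 := by linarith
  -- zero set is a subsingleton
  have hS : {t : ℝ | a + t * c = 0}.Subsingleton := by
    intro s hs t ht
    simp only [mem_setOf_eq] at hs ht
    by_cases hc0 : c = 0
    · exfalso
      have ha : a = 0 := by simpa [hc0] using hs
      have hb : b = 0 := by have := sub_eq_zero.mp hc0; linarith
      exact hab (by simp [ha, hb])
    · have hsc : s * c = t * c := by linarith
      exact mul_right_cancel₀ hc0 hsc
  -- integrability
  have hint : IntervalIntegrable (fun t : ℝ => |a + t * c| ^ (p - 2)) volume 0 1 := by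
    by_cases hc0 : c = 0
    · have ha : a ≠ 0 := by
        intro h
        exact hab (by simp [h, show b = 0 by have := sub_eq_zero.mp hc0; linarith])
      simp only [hc0, mul_zero, add_zero]
      exact intervalIntegrable_const
    · have h1 : IntervalIntegrable (fun x : ℝ => |x| ^ (p - 2)) volume a (a + c) :=
        aux_intervalIntegrable_abs_rpow hr _ _
      have h2 := h1.comp_add_left a
      have h3 := h2.comp_mul_right (c := c)
      have e0 : (a - a) / c = 0 := by simp [hc0]
      have e1 : (a + c - a) / c = 1 := by simp [hc0]
      rwa [e0, e1] at h3
  refine ⟨hint, ?_⟩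
  rw [intervalIntegral.integral_of_le (by norm_num : (0:ℝ) ≤ 1)]
  rw [MeasureTheory.setIntegral_pos_iff_support_of_nonneg_ae]
  · -- 0 < volume (support f ∩ Ioc 0 1)
    have hsub : Ioc (0:ℝ) 1 \ {t : ℝ | a + t * c = 0} ⊆
        Function.support (fun t : ℝ => |a + t * c| ^ (p - 2)) ∩ Ioc 0 1 := by
      intro t ht
      refine ⟨?_, ht.1⟩
      have : a + t * c ≠ 0 := ht.2
      have habs : 0 < |a + t * c| := abs_pos.mpr this
      exact (Real.rpow_pos_of_pos habs _).ne'
    have hnull : volume ({t : ℝ | a + t * c = 0}) = 0 := hS.measure_zero _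
    have : volume (Ioc (0:ℝ) 1 \ {t : ℝ | a + t * c = 0}) = volume (Ioc (0:ℝ) 1) :=
      measure_diff_null hnull
    have h1 : (0 : ENNReal) < volume (Ioc (0:ℝ) 1 \ {t : ℝ | a + t * c = 0}) := by
      rw [this]; simp [Real.volume_Ioc]
    exact h1.trans_le (measure_mono hsub)
  · filter_upwards with t using Real.rpow_nonneg (abs_nonneg _) _
  · rw [← intervalIntegrable_iff_integrableOn_Ioc_of_le (by norm_num : (0:ℝ) ≤ 1)]
    exact hint
end

section
/- Let p > 1 be a real number. For all real numbers a and b, one has |b|^{p−2}·b − |a|^{p−2}·a = (p − 1)·(b − a)·∫₀¹ |a + t·(b − a)|^{p−2} dt. -/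
open MeasureTheory

lemma absRpowII {r : ℝ} (hr : -1 < r) (c : ℝ) :
    IntervalIntegrable (fun x : ℝ => |x| ^ r) volume 0 c := by
  have key : ∀ d : ℝ, 0 ≤ d → IntervalIntegrable (fun x : ℝ => |x| ^ r) volume 0 d := by
    intro d hd
    refine (intervalIntegral.intervalIntegrable_rpow' hr (a := 0) (b := d)).congr ?_
    have : Set.uIoc (0:ℝ) d = Set.Ioc 0 d := Set.uIoc_of_le hd
    intro x hx
    rw [this] at hx
    simp only [abs_of_nonneg hx.1.le]
  rcases le_or_gt 0 c with h | h
  · exact key c h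
  · rw [IntervalIntegrable.iff_comp_neg]
    simp only [abs_neg, neg_zero]
    exact key (-c) (by linarith)

lemma absRpowInt {r : ℝ} (hr : -1 < r) (hr' : r ≠ -1) (c : ℝ) :
    ∫ u in (0:ℝ)..c, |u| ^ r = |c| ^ r * c / (r + 1) := by
  have key : ∀ d : ℝ, 0 ≤ d → ∫ u in (0:ℝ)..d, |u| ^ r = |d| ^ r * d / (r + 1) := by
    intro d hd
    have congr1 : ∫ u in (0:ℝ)..d, |u| ^ r = ∫ u in (0:ℝ)..d, u ^ r := by
      apply intervalIntegral.integral_congr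
      intro x hx
      rw [Set.uIcc_of_le hd] at hx
      simp [abs_of_nonneg hx.1]
    rw [congr1, integral_rpow (Or.inl hr)]
    rw [abs_of_nonneg hd]
    rcases eq_or_lt_of_le hd with h | h
    · simp [← h, Real.zero_rpow (by linarith : r + 1 ≠ 0)]
    · rw [Real.zero_rpow (by linarith : r + 1 ≠ 0), ← Real.rpow_add_one (ne_of_gt h)]
      ring
  rcases le_or_gt 0 c with h | h
  · exact key c h
  · have h1 := key (-c) (by linarith)
    have h2 : ∫ u in (0:ℝ)..(-c), |u| ^ r = ∫ u in (0:ℝ)..(-c), |(-u)| ^ r := by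
      simp [abs_neg]
    rw [h2, intervalIntegral.integral_comp_neg (fun u => |u| ^ r)] at h1
    simp only [neg_neg, neg_zero, abs_neg] at h1
    rw [intervalIntegral.integral_symm 0 c] at h1
    have : |c| ^ r * (-c) / (r + 1) = -(|c| ^ r * c / (r + 1)) := by ring
    rw [this] at h1
    linarith

/-- The factorization `|b|^{p−2} b − |a|^{p−2} a = (p−1)(b−a) ∫₀¹ |a + t(b−a)|^{p−2} dt`. -/
theorem Phi_difference_factorization (p : ℝ) (hp : 1 < p) (a b : ℝ) :
    |b| ^ (p - 2) * b - |a| ^ (p - 2) * a =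
      (p - 1) * (b - a) * ∫ t in (0 : ℝ)..1, |a + t * (b - a)| ^ (p - 2) := by
  have hr : (-1 : ℝ) < p - 2 := by linarith
  have hr' : p - 2 ≠ -1 := by intro h; linarith [h]
  rcases eq_or_ne b a with rfl | hba
  · simp
  have hc : b - a ≠ 0 := sub_ne_zero.mpr hba
  have step : ∫ t in (0:ℝ)..1, |a + t * (b - a)| ^ (p - 2)
      = (b - a)⁻¹ * ∫ u in a..b, |u| ^ (p - 2) := by
    have := intervalIntegral.integral_comp_mul_add (a := (0:ℝ)) (b := 1)
      (fun u => |u| ^ (p - 2)) hc a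
    simp only [mul_zero, zero_add, mul_one, smul_eq_mul] at this
    calc ∫ t in (0:ℝ)..1, |a + t * (b - a)| ^ (p - 2)
        = ∫ t in (0:ℝ)..1, |(b - a) * t + a| ^ (p - 2) := by
          apply intervalIntegral.integral_congr; intro x _; ring_nf
      _ = (b - a)⁻¹ * ∫ u in a..(b - a + a), |u| ^ (p - 2) := this
      _ = (b - a)⁻¹ * ∫ u in a..b, |u| ^ (p - 2) := by ring_nf
  have split : ∫ u in a..b, |u| ^ (p - 2)
      = (∫ u in (0:ℝ)..b, |u| ^ (p - 2)) - ∫ u in (0:ℝ)..a, |u| ^ (p - 2) := by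
    rw [intervalIntegral.integral_interval_sub_left (absRpowII hr b) (absRpowII hr a)]
  rw [step, split, absRpowInt hr hr' a, absRpowInt hr hr' b]
  have hp1 : p - 2 + 1 = p - 1 := by ring
  have hp' : p - 1 ≠ 0 := by linarith
  rw [hp1]
  field_simp
end

section
/- Let n ≥ 1 and let f : ℝⁿ → ℝ be a measurable function such that f = 0 almost everywhere outside some bounded set, and such that for every i ∈ {1,…,n}, for almost every (x, h) ∈ ℝⁿ × ℝ (with respect to the product Lebesgue measure), f(x + h·eᵢ) = f(x). Then f = 0 almost everywhere on ℝⁿ. -/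
open MeasureTheory

/-- Rigidity: a measurable function vanishing a.e. outside a bounded set, whose increments in
every coordinate direction vanish a.e., vanishes almost everywhere. -/
theorem rigidity_ae_shift_invariant (n : ℕ) (hn : 1 ≤ n)
    (f : (Fin n → ℝ) → ℝ) (hf : Measurable f)
    (hsupp : ∃ S : Set (Fin n → ℝ), Bornology.IsBounded S ∧
      ∀ᵐ x : Fin n → ℝ, x ∉ S → f x = 0)
    (hshift : ∀ i : Fin n, ∀ᵐ q : (Fin n → ℝ) × ℝ,
      f (q.1 + q.2 • (Pi.single i 1 : Fin n → ℝ)) = f q.1) :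
    ∀ᵐ x : Fin n → ℝ, f x = 0 := by
  obtain ⟨S, hSb, hS0⟩ := hsupp
  obtain ⟨R, hR⟩ := hSb.subset_ball 0
  set i : Fin n := ⟨0, hn⟩ with hi
  set e : Fin n → ℝ := Pi.single i 1 with he
  have hshift' := hshift i
  -- the shift set is measurable
  have hmeas : MeasurableSet {q : ℝ × (Fin n → ℝ) | f (q.2 + q.1 • e) = f q.2} := by
    apply measurableSet_eq_fun
    · exact hf.comp (measurable_snd.add (measurable_fst.smul measurable_const))
    · exact hf.comp measurable_snd
  -- swap to get a.e. h, a.e. x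
  have hswap : ∀ᵐ q : ℝ × (Fin n → ℝ), f (q.2 + q.1 • e) = f q.2 := by
    have key : ∀ᵐ q ∂(Measure.map Prod.swap (volume : Measure ((Fin n → ℝ) × ℝ))),
        f (q.2 + q.1 • e) = f q.2 := by
      rw [ae_map_iff measurable_swap.aemeasurable hmeas]
      exact hshift'
    have heq : Measure.map Prod.swap (volume : Measure ((Fin n → ℝ) × ℝ)) =
        (volume : Measure (ℝ × (Fin n → ℝ))) := by
      rw [Measure.volume_eq_prod, Measure.prod_swap, ← Measure.volume_eq_prod]
    rwa [heq] at key
  have hae : ∀ᵐ h : ℝ, ∀ᵐ x : Fin n → ℝ, f (x + h • e) = f x :=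
    Measure.ae_ae_of_ae_prod hswap
  -- choose a large good h
  have hbad : volume {h : ℝ | ¬ ∀ᵐ x : Fin n → ℝ, f (x + h • e) = f x} = 0 := hae
  have hex : ∃ h ∈ Set.Ioi (2 * |R| + 1),
      ∀ᵐ x : Fin n → ℝ, f (x + h • e) = f x := by
    by_contra hcon
    push_neg at hcon
    have hsub : Set.Ioi (2 * |R| + 1) ⊆
        {h : ℝ | ¬ ∀ᵐ x : Fin n → ℝ, f (x + h • e) = f x} := fun h hh => Filter.not_eventually.mpr (hcon h hh)
    have := measure_mono_null hsub hbad
    simp [Real.volume_Ioi] at this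
  obtain ⟨h, hhR, hh⟩ := hex
  have hhpos : (0 : ℝ) < h := lt_of_le_of_lt (by positivity) hhR
  -- translate the support condition
  have htrans : ∀ᵐ x : Fin n → ℝ, x + h • e ∉ S → f (x + h • e) = 0 :=
    (measurePreserving_add_right volume (h • e)).quasiMeasurePreserving.ae hS0
  filter_upwards [hh, htrans, hS0] with x hx1 hx2 hx3
  by_cases hxS : x ∈ S
  · -- x ∈ ball 0 R, so x + h•e ∉ S
    have hxR : ‖x‖ < R := by simpa [dist_eq_norm] using hR hxS
    have hout : x + h • e ∉ S := by
      intro hmem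
      have h1 : ‖x + h • e‖ < R := by simpa [dist_eq_norm] using hR hmem
      have h2 : |(x + h • e) i| ≤ ‖x + h • e‖ := norm_le_pi_norm (x + h • e) i
      have h3 : (x + h • e) i = x i + h := by
        simp [he, Pi.single_eq_same]
      have h4 : |x i| ≤ ‖x‖ := norm_le_pi_norm x i
      have h5 : h - |x i| ≤ |x i + h| := by
        have habs := abs_sub_abs_le_abs_sub h (-(x i))
        rw [abs_neg, sub_neg_eq_add, abs_of_pos hhpos, add_comm] at habs
        exact habs
      have h6 : h - |x i| < R := by
        rw [← h3] at h5
        linarith [h5.trans h2]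
      have hRabs : R ≤ |R| := le_abs_self R
      have hhR' : 2 * |R| + 1 < h := hhR
      linarith
    rw [hx1] at *
    exact hx2 hout
  · exact hx3 hxS
end
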